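/- Let K be a difference subfield of U with σ(K) = K, a a finite tuple with σ(a) ∈ K(a)^alg, and c a finite tuple with coordinates in K(a)_σ such that a ∈ K(c)^alg and σ(c) ∈ K(c,σ^ℓ(c)) for every ℓ > 0. Let d be a finite tuple with σ(d) ∈ K(d)^alg, K(d)^alg = K(a)^alg and ld(d/K) = dd(a/K). Then ld((c,d)/K) = dd(a/K). -/

import Mathlib

/- Setting: a large algebraically closed field `U` with an automorphism `σ`.
   Tuples are maps `Fin n → U`; for a tuple `t`, the relevant set of coordinates
   is `Set.range t`.  `fAdj E s` is the subfield `E(s)` generated by a subfield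
   `E` and a set `s`, and `deg E s` is the degree `μ(s/E) = [E(s):E]`. -/

set_option maxHeartbeats 1000000
set_option synthInstance.maxHeartbeats 1000000

open Filter Set

variable {U : Type*}

/-- The subfield `E(s)` generated by the subfield `E` and the set `s`. -/
noncomputable def fAdj [Field U] (E : Subfield U) (s : Set U) : Subfield U :=
  (IntermediateField.adjoin E s).toSubfield

/-- The degree `μ(s/E) = [E(s):E]` (as `Module.finrank`; it is `0` when infinite). -/
noncomputable def deg [Field U] (E : Subfield U) (s : Set U) : ℕ :=
  Module.finrank E (IntermediateField.adjoin E s)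

/-- `k ↦ μ(σ^{k+1}(s) / K(s, σ(s), …, σ^k(s)))`: the sequence whose eventual
value is the limit degree `ld(s/K)`. -/
noncomputable def ldSeq [Field U] (σ : U ≃+* U) (K : Subfield U) (s : Set U) (k : ℕ) : ℕ :=
  deg (fAdj K (⋃ i ∈ Set.Iic k, ⇑(σ ^ i) '' s)) (⇑(σ ^ (k + 1)) '' s)

/-- `k ↦ μ(σ^k(s) / K(s))`: the sequence whose `k`-th roots converge to the
distant degree `dd(s/K)`. -/
noncomputable def ddSeq [Field U] (σ : U ≃+* U) (K : Subfield U) (s : Set U) (k : ℕ) : ℕ :=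
  deg (fAdj K s) (⇑(σ ^ k) '' s)

/-- The inversive closure `K^inv = ⋃ₙ σ^{-n}(K)`. -/
noncomputable def Kinv [Field U] (σ : U ≃+* U) (K : Subfield U) : Subfield U :=
  ⨆ n : ℕ, K.map (σ⁻¹ ^ n : U ≃+* U).toRingHom

/-- The difference field `K(s)_σ = K(σ^i(s) : i ∈ ℕ)` generated by `s` over `K`. -/
noncomputable def diffAdj [Field U] (σ : U ≃+* U) (K : Subfield U) (s : Set U) : Subfield U :=
  fAdj K (⋃ i : ℕ, ⇑(σ ^ i) '' s)


/-! Put `s = c ∪ d` and `∇ₖ t = (t, σ t, …, σᵏ t)` (`prolong σ t k`). Since `a` and `s` are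
interalgebraic over `K`, `μ(σᵏ a / K(a)) ≤ C · μ(σᵏ s / K(s)) ≤ C' · ld(s/K)ᵏ`, so
`dd(a/K) ≤ ld(s/K)`. Conversely, `σ(c) ∈ K(c, σ^ℓ c)` gives `∇ₙ c ⊆ K(c, σⁿ c)`, and
`c ⊆ K(∇_N a)` with `∇_N a` algebraic over `K(d)`. So past the index `k` where both limit degrees
have stabilised, `ld(s/K)ᵐ = [K(∇ₖ₊ₘ s) : K(∇ₖ s)] ≤ ld(d/K)ᵐ · μ(∇_N a / K(d))` for every `m`,
whence `ld(s/K) ≤ ld(d/K) = dd(a/K)`. -/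

section FieldAdjoin

variable [Field U] {E F : Subfield U} {s t : Set U}

lemma fAdj_eq_closure (E : Subfield U) (s : Set U) :
    fAdj E s = Subfield.closure (↑E ∪ s) := by
  rw [fAdj, IntermediateField.adjoin_toSubfield,
    show range (algebraMap E U) = E from Subtype.range_val]

lemma le_fAdj (E : Subfield U) (s : Set U) : E ≤ fAdj E s := by
  rw [fAdj_eq_closure]
  exact fun y hy => Subfield.subset_closure (Or.inl hy)

lemma subset_fAdj (E : Subfield U) (s : Set U) : s ⊆ fAdj E s := by
  rw [fAdj_eq_closure]
  exact fun y hy => Subfield.subset_closure (Or.inr hy)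

lemma fAdj_le (hE : E ≤ F) (hs : s ⊆ F) : fAdj E s ≤ F := by
  rw [fAdj_eq_closure]
  exact Subfield.closure_le.2 (union_subset hE hs)

lemma fAdj_mono_set (E : Subfield U) (h : s ⊆ t) : fAdj E s ≤ fAdj E t :=
  fAdj_le (le_fAdj E t) (h.trans (subset_fAdj E t))

lemma fAdj_mono_base (h : E ≤ F) (s : Set U) : fAdj E s ≤ fAdj F s :=
  fAdj_le (h.trans (le_fAdj F s)) (subset_fAdj F s)

lemma fAdj_fAdj (E : Subfield U) (s t : Set U) : fAdj (fAdj E s) t = fAdj E (s ∪ t) :=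
  le_antisymm
    (fAdj_le (fAdj_mono_set E subset_union_left) (subset_union_right.trans (subset_fAdj _ _)))
    (fAdj_le ((le_fAdj E s).trans (le_fAdj _ _))
      (union_subset ((subset_fAdj E s).trans (le_fAdj _ t)) (subset_fAdj _ _)))

lemma map_fAdj (f : U →+* U) (E : Subfield U) (s : Set U) :
    (fAdj E s).map f = fAdj (E.map f) (f '' s) := by
  rw [fAdj_eq_closure, fAdj_eq_closure, RingHom.map_field_closure, image_union,
    Subfield.coe_map]

lemma deg_eq_relfinrank (E : Subfield U) (s : Set U) :
    deg E s = E.relfinrank (fAdj E s) := by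
  rw [Subfield.relfinrank_eq_finrank_of_le (le_fAdj E s), deg]
  rfl

lemma deg_map (f : U →+* U) (E : Subfield U) (s : Set U) :
    deg (E.map f) (f '' s) = deg E s := by
  rw [deg_eq_relfinrank, deg_eq_relfinrank, ← map_fAdj, Subfield.relfinrank_map_map]

lemma deg_union (E : Subfield U) (s t : Set U) :
    deg E (s ∪ t) = deg E s * deg (fAdj E s) t := by
  rw [deg_eq_relfinrank, deg_eq_relfinrank, deg_eq_relfinrank, fAdj_fAdj]
  exact (Subfield.relfinrank_mul_relfinrank (le_fAdj E s)
    (fAdj_mono_set E subset_union_left)).symm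

lemma deg_empty (E : Subfield U) : deg E ∅ = 1 := by
  rw [deg, IntermediateField.adjoin_empty]
  exact IntermediateField.finrank_bot

end FieldAdjoin

section RelAlgClosure

variable [Field U] {E F : Subfield U} {s : Set U} {x : U}

noncomputable def relAlgClosure (E : Subfield U) : Subfield U :=
  (algebraicClosure E U).toSubfield

lemma mem_relAlgClosure : x ∈ relAlgClosure E ↔ IsIntegral E x :=
  mem_algebraicClosure_iff'

lemma le_relAlgClosure (E : Subfield U) : E ≤ relAlgClosure E := fun y hy =>
  mem_relAlgClosure.2 (isIntegral_algebraMap (x := (⟨y, hy⟩ : E)))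

lemma IsIntegral.of_subfield_le (h : E ≤ F) (hx : IsIntegral E x) : IsIntegral F x :=
  IsIntegral.map_of_comp_eq (Subfield.inclusion h) (RingHom.id U) rfl hx

lemma relAlgClosure_mono (h : E ≤ F) : relAlgClosure E ≤ relAlgClosure F := fun _ hy =>
  mem_relAlgClosure.2 ((mem_relAlgClosure.1 hy).of_subfield_le h)

lemma apply_mem_relAlgClosure_map (f : U ≃+* U) (hx : x ∈ relAlgClosure E) :
    f x ∈ relAlgClosure (E.map f.toRingHom) := by
  let φ : E →+* E.map f.toRingHom := (f.toRingHom.comp E.subtype).codRestrict _ fun y =>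
    Subfield.mem_map.2 ⟨y, y.2, rfl⟩
  exact mem_relAlgClosure.2 <|
    (mem_relAlgClosure.1 hx).map_of_comp_eq φ f.toRingHom (RingHom.ext fun _ => rfl)

lemma deg_pos (hs : s.Finite) (hsE : s ⊆ relAlgClosure E) : 0 < deg E s := by
  have := hs.to_subtype
  have := IntermediateField.finiteDimensional_adjoin (K := E) fun y hy =>
    mem_relAlgClosure.1 (hsE hy)
  exact Module.finrank_pos

lemma relfinrank_fAdj_pos (hs : s.Finite) (hsE : s ⊆ relAlgClosure E) :
    0 < E.relfinrank (fAdj E s) :=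
  deg_eq_relfinrank E s ▸ deg_pos hs hsE

lemma le_relAlgClosure_of_relfinrank_pos (hEF : E ≤ F) (hpos : 0 < E.relfinrank F) :
    F ≤ relAlgClosure E := by
  rw [Subfield.relfinrank_eq_finrank_of_le hEF] at hpos
  have : Module.Finite E (Subfield.extendScalars hEF) := Module.finite_of_finrank_pos hpos
  intro y hy
  exact mem_relAlgClosure.2 ((IsIntegral.of_finite E
    (⟨y, hy⟩ : Subfield.extendScalars hEF)).map (Subfield.extendScalars hEF).val)

lemma relAlgClosure_fAdj_le (hEF : E ≤ F) (hs : s.Finite) (hsF : s ⊆ relAlgClosure F) :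
    relAlgClosure (fAdj E s) ≤ relAlgClosure F := by
  intro y hy
  have hy' : {y} ⊆ (relAlgClosure (fAdj F s) : Set U) :=
    singleton_subset_iff.2 (relAlgClosure_mono (fAdj_mono_base hEF s) hy)
  have hpos : 0 < F.relfinrank (fAdj F (s ∪ {y})) := by
    rw [← deg_eq_relfinrank, deg_union]
    exact Nat.mul_pos (deg_pos hs hsF) (deg_pos (finite_singleton y) hy')
  exact le_relAlgClosure_of_relfinrank_pos (le_fAdj F _) hpos (subset_fAdj F _ (Or.inr rfl))

end RelAlgClosure

section Degree

variable [Field U] {E F : Subfield U} {s t : Set U} {x : U}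

lemma deg_le_of_subset_fAdj (hst : s ⊆ fAdj E t) (ht : t.Finite)
    (htE : t ⊆ relAlgClosure E) : deg E s ≤ deg E t := by
  rw [deg_eq_relfinrank, deg_eq_relfinrank]
  have hle : fAdj E s ≤ fAdj E t := fAdj_le (le_fAdj E t) hst
  exact Nat.le_of_dvd (relfinrank_fAdj_pos ht htE)
    ⟨_, (Subfield.relfinrank_mul_relfinrank (le_fAdj E s) hle).symm⟩

lemma minpoly_natDegree_le_of_le (h : E ≤ F) (hx : IsIntegral E x) :
    (minpoly F x).natDegree ≤ (minpoly E x).natDegree := by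
  have hcomp : (algebraMap F U).comp (Subfield.inclusion h) = algebraMap E U := rfl
  have hroot : Polynomial.aeval x ((minpoly E x).map (Subfield.inclusion h)) = 0 := by
    rw [Polynomial.aeval_def, Polynomial.eval₂_map, hcomp]
    exact minpoly.aeval E x
  exact (Polynomial.natDegree_le_natDegree
    (minpoly.min F x ((minpoly.monic hx).map _) hroot)).trans Polynomial.natDegree_map_le

lemma deg_le_of_base_le (h : E ≤ F) (hs : s.Finite) (hsE : s ⊆ relAlgClosure E) :
    deg F s ≤ deg E s := by
  classical
  obtain ⟨u, rfl⟩ : ∃ u : Finset U, ↑u = s := ⟨hs.toFinset, hs.coe_toFinset⟩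
  induction u using Finset.induction generalizing E F with
  | empty => simp [deg_empty]
  | insert y u _ ih =>
    have hy : IsIntegral E y := mem_relAlgClosure.1 (hsE (by simp))
    rw [Finset.coe_insert, insert_eq, deg_union, deg_union]
    refine Nat.mul_le_mul ?_ (ih (fAdj_mono_base h {y}) u.finite_toSet ?_)
    · rw [deg, deg, IntermediateField.adjoin.finrank hy,
        IntermediateField.adjoin.finrank (hy.of_subfield_le h)]
      exact minpoly_natDegree_le_of_le h hy
    · exact fun z hz => relAlgClosure_mono (le_fAdj E {y}) (hsE (by simp [hz]))

end Degree

section Twist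

variable [Field U] {K : Subfield U} (f : U ≃+* U) {s t : Set U}

lemma fAdj_image (hf : K.map f.toRingHom = K) (t : Set U) :
    fAdj K (f '' t) = (fAdj K t).map f.toRingHom := by
  rw [map_fAdj, hf]
  rfl

lemma image_subset_fAdj_image (hf : K.map f.toRingHom = K) (h : s ⊆ fAdj K t) :
    f '' s ⊆ fAdj K (f '' t) := by
  rw [fAdj_image f hf]
  exact image_mono h

lemma deg_image (hf : K.map f.toRingHom = K) (t s : Set U) :
    deg (fAdj K (f '' t)) (f '' s) = deg (fAdj K t) s := by
  rw [fAdj_image f hf]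
  exact deg_map _ _ _

lemma image_subset_relAlgClosure_image (hf : K.map f.toRingHom = K)
    (h : s ⊆ relAlgClosure (fAdj K t)) : f '' s ⊆ relAlgClosure (fAdj K (f '' t)) := by
  rw [fAdj_image f hf]
  rintro _ ⟨x, hx, rfl⟩
  exact apply_mem_relAlgClosure_map f (h hx)

end Twist

lemma Subfield.map_pow_eq_self [Field U] {σ : U ≃+* U} {K : Subfield U}
    (hK : K.map σ.toRingHom = K) (k : ℕ) : K.map (σ ^ k).toRingHom = K := by
  induction k with
  | zero => exact SetLike.ext fun _ => by simp
  | succ k ih =>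
    rw [pow_succ', show ((σ * σ ^ k : U ≃+* U)).toRingHom = σ.toRingHom.comp (σ ^ k).toRingHom
      from rfl, ← Subfield.map_map, ih, hK]

section Prolong

variable [Field U] (σ : U ≃+* U) {t : Set U} {k : ℕ}

def prolong (t : Set U) (k : ℕ) : Set U := ⋃ i ∈ Iic k, ⇑(σ ^ i) '' t

lemma image_pow_add (i j : ℕ) (s : Set U) :
    ⇑(σ ^ i) '' (⇑(σ ^ j) '' s) = ⇑(σ ^ (i + j)) '' s := by
  rw [image_image, pow_add]
  rfl

lemma image_pow_zero (s : Set U) : ⇑(σ ^ 0) '' s = s := image_id' s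

lemma image_pow_subset_prolong {i : ℕ} (h : i ≤ k) : ⇑(σ ^ i) '' t ⊆ prolong σ t k :=
  subset_biUnion_of_mem (u := fun i => ⇑(σ ^ i) '' t) (mem_Iic.2 h)

lemma subset_prolong (t : Set U) (k : ℕ) : t ⊆ prolong σ t k := by
  simpa only [image_pow_zero] using image_pow_subset_prolong σ (t := t) (Nat.zero_le k)

lemma prolong_succ (t : Set U) (k : ℕ) :
    prolong σ t (k + 1) = prolong σ t k ∪ ⇑(σ ^ (k + 1)) '' t := by
  simp only [prolong, mem_Iic]
  exact biUnion_le_succ _ k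

lemma prolong_mono (t : Set U) : Monotone (prolong σ t) := fun _ _ h =>
  biUnion_subset_biUnion_left (Iic_subset_Iic.2 h)

lemma prolong_finite (ht : t.Finite) (k : ℕ) : (prolong σ t k).Finite :=
  (finite_Iic k).biUnion fun _ _ => ht.image _

lemma prolong_union (s t : Set U) (k : ℕ) :
    prolong σ (s ∪ t) k = prolong σ s k ∪ prolong σ t k := by
  simp only [prolong, image_union, mem_Iic, ← iUnion_union_distrib]

end Prolong

section DifferenceField

variable [Field U] (σ : U ≃+* U) {K : Subfield U} {s t : Set U}

lemma deg_prolong_add (t : Set U) (k m : ℕ) :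
    deg (fAdj K (prolong σ t k)) (prolong σ t (k + m)) =
      ∏ j ∈ Finset.range m, ldSeq σ K t (k + j) := by
  induction m with
  | zero =>
    rw [deg_eq_relfinrank, Finset.prod_range_zero, add_zero,
      fAdj_fAdj, union_self, Subfield.relfinrank_self]
  | succ m ih =>
    rw [Finset.prod_range_succ, ← ih, ← add_assoc, prolong_succ, deg_union, fAdj_fAdj,
      union_eq_right.2 (prolong_mono σ t (k.le_add_right m))]
    rfl

lemma deg_prolong_add_eq_pow {k L : ℕ} (hL : ∀ j, k ≤ j → ldSeq σ K t j = L) (m : ℕ) :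
    deg (fAdj K (prolong σ t k)) (prolong σ t (k + m)) = L ^ m := by
  rw [deg_prolong_add, Finset.prod_congr rfl fun j _ => hL _ (k.le_add_right j),
    Finset.prod_const, Finset.card_range]

lemma image_pow_subset_relAlgClosure (hK : K.map σ.toRingHom = K) (ht : t.Finite)
    (hσt : ⇑σ '' t ⊆ relAlgClosure (fAdj K t)) (hs : s ⊆ relAlgClosure (fAdj K t)) (k : ℕ) :
    ⇑(σ ^ k) '' s ⊆ relAlgClosure (fAdj K t) := by
  induction k with
  | zero => rwa [image_pow_zero]
  | succ k ih =>
    rw [add_comm, ← image_pow_add, pow_one]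
    exact (image_subset_relAlgClosure_image σ hK ih).trans
      (relAlgClosure_fAdj_le (le_fAdj K t) (ht.image σ) hσt)

lemma image_subset_relAlgClosure_of_eq (hK : K.map σ.toRingHom = K) (ht : t.Finite)
    (hσt : ⇑σ '' t ⊆ relAlgClosure (fAdj K t))
    (hst : relAlgClosure (fAdj K s) = relAlgClosure (fAdj K t)) :
    ⇑σ '' s ⊆ relAlgClosure (fAdj K s) :=
  hst ▸ image_pow_subset_relAlgClosure σ hK ht hσt
    (hst ▸ (subset_fAdj K s).trans (le_relAlgClosure _)) 1

lemma prolong_subset_relAlgClosure (hK : K.map σ.toRingHom = K) (ht : t.Finite)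
    (hσt : ⇑σ '' t ⊆ relAlgClosure (fAdj K t)) (k : ℕ) :
    prolong σ t k ⊆ relAlgClosure (fAdj K t) :=
  iUnion₂_subset fun i _ => image_pow_subset_relAlgClosure σ hK ht hσt
    ((subset_fAdj K t).trans (le_relAlgClosure _)) i

lemma prolong_subset_fAdj_of_forall_pos (hK : K.map σ.toRingHom = K)
    (hσt : ∀ ℓ, 0 < ℓ → ⇑σ '' t ⊆ fAdj K (t ∪ ⇑(σ ^ ℓ) '' t)) (m : ℕ) :
    prolong σ t m ⊆ fAdj K (t ∪ ⇑(σ ^ m) '' t) := by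
  suffices ∀ j ≤ m, ⇑(σ ^ j) '' t ⊆ fAdj K (t ∪ ⇑(σ ^ m) '' t) from
    iUnion₂_subset fun j hj => this j hj
  intro j
  induction j with
  | zero =>
    intro _
    rw [image_pow_zero]
    exact subset_union_left.trans (subset_fAdj _ _)
  | succ j ih =>
    intro hj
    have h1 : ⇑(σ ^ 1) '' t ⊆ fAdj K (t ∪ ⇑(σ ^ (m - j)) '' t) := by
      rw [pow_one]
      exact hσt (m - j) (by omega)
    have h := image_subset_fAdj_image (σ ^ j) (Subfield.map_pow_eq_self hK j) h1
    rw [image_union, image_pow_add, image_pow_add, Nat.add_sub_cancel' (by omega)] at h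
    exact h.trans (fAdj_le (le_fAdj _ _)
      (union_subset (ih (by omega)) (subset_union_right.trans (subset_fAdj _ _))))

lemma exists_subset_fAdj_prolong (ht : t.Finite) (h : t ⊆ diffAdj σ K s) :
    ∃ N, t ⊆ fAdj K (prolong σ s N) := by
  have hmono : Monotone fun N => fAdj K (prolong σ s N) := fun _ _ hMN =>
    fAdj_mono_set K (prolong_mono σ s hMN)
  have hsup : diffAdj σ K s ≤ ⨆ N, fAdj K (prolong σ s N) :=
    fAdj_le ((le_fAdj K _).trans (le_iSup (fun N => fAdj K (prolong σ s N)) 0)) <|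
      iUnion_subset fun i => ((image_pow_subset_prolong σ le_rfl).trans (subset_fAdj K _)).trans
        (SetLike.coe_subset_coe.2 (le_iSup (fun N => fAdj K (prolong σ s N)) i))
  have hev : ∀ x ∈ t, ∀ᶠ N in atTop, x ∈ fAdj K (prolong σ s N) := fun x hx => by
    obtain ⟨N, hN⟩ := (Subfield.mem_iSup_of_directed hmono.directed_le).1 (hsup (h hx))
    exact eventually_atTop.2 ⟨N, fun M hM => hmono hM hN⟩
  exact ((eventually_all_finite ht).2 hev).exists

end DifferenceField

lemma le_of_tendsto_rpow_of_le_mul_pow {u : ℕ → ℝ} {C L D : ℝ} (hu : ∀ k, 0 ≤ u k)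
    (hL : 0 ≤ L) (hD : Tendsto (fun k => u k ^ (1 / (k : ℝ))) atTop (nhds D))
    (hle : ∀ᶠ k in atTop, u k ≤ C * L ^ k) : D ≤ L := by
  -- `C` may be nonpositive; `C' ^ (1 / k) → 1` needs `0 < C'`.
  set C' := max C 1
  have hC' : 0 < C' := one_pos.trans_le (le_max_right _ _)
  have hlim : Tendsto (fun k : ℕ => C' ^ (1 / (k : ℝ)) * L) atTop (nhds L) := by
    simpa [Function.comp_def] using ((Real.continuousAt_const_rpow hC'.ne').tendsto.comp
      tendsto_one_div_atTop_nhds_zero_nat).mul_const L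
  refine le_of_tendsto_of_tendsto hD hlim ?_
  filter_upwards [hle, eventually_gt_atTop 0] with k hk hk0
  calc u k ^ (1 / (k : ℝ)) ≤ (C' * L ^ k) ^ (1 / (k : ℝ)) :=
        Real.rpow_le_rpow (hu k) (hk.trans (by gcongr; exact le_max_left _ _)) (by positivity)
    _ = C' ^ (1 / (k : ℝ)) * L := by
        rw [Real.mul_rpow hC'.le (by positivity), one_div, Real.pow_rpow_inv_natCast hL hk0.ne']

lemma Nat.le_of_forall_pow_le_mul_pow {a b C : ℕ} (h : ∀ m, a ^ m ≤ C * b ^ m) : a ≤ b := by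
  have hlim : Tendsto (fun k : ℕ => ((a : ℝ) ^ k) ^ (1 / (k : ℝ))) atTop (nhds a) :=
    tendsto_const_nhds.congr' <| (eventually_gt_atTop 0).mono fun k hk => by
      simp only [one_div, Real.pow_rpow_inv_natCast (Nat.cast_nonneg a) hk.ne']
  exact_mod_cast le_of_tendsto_rpow_of_le_mul_pow (C := C) (fun k => by positivity)
    (Nat.cast_nonneg b) hlim (Eventually.of_forall fun m => by exact_mod_cast h m)

section DistantDegree

variable [Field U] (σ : U ≃+* U) {K : Subfield U} {s t : Set U}

lemma ddSeq_le_mul (hK : K.map σ.toRingHom = K) (hs : s.Finite) (ht : t.Finite)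
    (hσt : ⇑σ '' t ⊆ relAlgClosure (fAdj K t))
    (hst : relAlgClosure (fAdj K s) = relAlgClosure (fAdj K t)) (k : ℕ) :
    ddSeq σ K t k ≤ deg (fAdj K t) s * ddSeq σ K s k * deg (fAdj K s) t := by
  have hσk : K.map (σ ^ k).toRingHom = K := Subfield.map_pow_eq_self hK k
  have hσA {w : Set U} (hw : w ⊆ relAlgClosure (fAdj K t)) :
      ⇑(σ ^ k) '' w ⊆ relAlgClosure (fAdj K t) :=
    image_pow_subset_relAlgClosure σ hK ht hσt hw k
  have htA : t ⊆ relAlgClosure (fAdj K t) := (subset_fAdj K t).trans (le_relAlgClosure _)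
  have hsA : s ⊆ relAlgClosure (fAdj K t) := hst ▸ (subset_fAdj K s).trans (le_relAlgClosure _)
  calc ddSeq σ K t k = deg (fAdj K t) (⇑(σ ^ k) '' t) := rfl
    _ ≤ deg (fAdj K t) (⇑(σ ^ k) '' s ∪ ⇑(σ ^ k) '' t) :=
        deg_le_of_subset_fAdj (subset_union_right.trans (subset_fAdj _ _))
          ((hs.image _).union (ht.image _)) (union_subset (hσA hsA) (hσA htA))
    _ = deg (fAdj K t) (⇑(σ ^ k) '' s) *
          deg (fAdj (fAdj K t) (⇑(σ ^ k) '' s)) (⇑(σ ^ k) '' t) := deg_union ..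
    _ ≤ deg (fAdj K t) (s ∪ ⇑(σ ^ k) '' s) * deg (fAdj K (⇑(σ ^ k) '' s)) (⇑(σ ^ k) '' t) := by
        gcongr ?_ * ?_
        · exact deg_le_of_subset_fAdj (subset_union_right.trans (subset_fAdj _ _))
            (hs.union (hs.image _)) (union_subset hsA (hσA hsA))
        · exact deg_le_of_base_le (fAdj_mono_base (le_fAdj K t) _) (ht.image _)
            (image_subset_relAlgClosure_image _ hσk (hst ▸ htA))
    _ = deg (fAdj K t) s * deg (fAdj (fAdj K t) s) (⇑(σ ^ k) '' s) * deg (fAdj K s) t := by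
        rw [deg_union, deg_image _ hσk]
    _ ≤ deg (fAdj K t) s * ddSeq σ K s k * deg (fAdj K s) t := by
        gcongr
        exact deg_le_of_base_le (fAdj_mono_base (le_fAdj K t) s) (hs.image _)
          (hst ▸ hσA hsA)

lemma ddSeq_le_mul_pow (hK : K.map σ.toRingHom = K) (hs : s.Finite)
    (hσs : ⇑σ '' s ⊆ relAlgClosure (fAdj K s)) {k L : ℕ}
    (hL : ∀ j, k ≤ j → ldSeq σ K s j = L) (m : ℕ) :
    ddSeq σ K s (k + m) ≤ deg (fAdj K s) (prolong σ s k) * L ^ (k + m) := by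
  have hLpos : 0 < L := hL k le_rfl ▸ deg_pos (hs.image _)
    ((image_pow_subset_relAlgClosure σ hK hs hσs ((subset_fAdj K s).trans
      (le_relAlgClosure _)) _).trans (relAlgClosure_mono (fAdj_mono_set K (subset_prolong σ s k))))
  calc ddSeq σ K s (k + m) ≤ deg (fAdj K s) (prolong σ s (k + m)) :=
        deg_le_of_subset_fAdj ((image_pow_subset_prolong σ le_rfl).trans (subset_fAdj _ _))
          (prolong_finite σ hs _) (prolong_subset_relAlgClosure σ hK hs hσs _)
    _ = deg (fAdj K s) (prolong σ s k) * L ^ m := by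
        rw [← union_eq_right.2 (prolong_mono σ s (k.le_add_right m)), deg_union, fAdj_fAdj,
          union_eq_right.2 (subset_prolong σ s k), deg_prolong_add_eq_pow σ hL]
    _ ≤ deg (fAdj K s) (prolong σ s k) * L ^ (k + m) := by
        exact Nat.mul_le_mul_left _ (Nat.pow_le_pow_right hLpos le_add_self)

theorem dd_le_ld (hK : K.map σ.toRingHom = K) (hs : s.Finite) (ht : t.Finite)
    (hσt : ⇑σ '' t ⊆ relAlgClosure (fAdj K t))
    (hst : relAlgClosure (fAdj K s) = relAlgClosure (fAdj K t)) {D : ℝ} {L : ℕ}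
    (hD : Tendsto (fun k => (ddSeq σ K t k : ℝ) ^ (1 / (k : ℝ))) atTop (nhds D))
    (hL : ∀ᶠ k in atTop, ldSeq σ K s k = L) : D ≤ L := by
  obtain ⟨k, hk⟩ := eventually_atTop.1 hL
  have hσs := image_subset_relAlgClosure_of_eq σ hK ht hσt hst
  refine le_of_tendsto_rpow_of_le_mul_pow (fun _ => Nat.cast_nonneg _) (Nat.cast_nonneg L) hD
    (C := (deg (fAdj K t) s * deg (fAdj K s) (prolong σ s k) * deg (fAdj K s) t : ℕ))
    ((eventually_ge_atTop k).mono fun j hj => ?_)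
  obtain ⟨m, rfl⟩ := Nat.exists_eq_add_of_le hj
  have h := (ddSeq_le_mul σ hK hs ht hσt hst (k + m)).trans <| Nat.mul_le_mul_right _ <|
    Nat.mul_le_mul_left _ (ddSeq_le_mul_pow σ hK hs hσs hk m)
  exact_mod_cast h.trans_eq (by ring)

end DistantDegree

section LimitDegree

variable [Field U] (σ : U ≃+* U) {K : Subfield U} {b c d : Set U}

lemma deg_prolong_union_le (hK : K.map σ.toRingHom = K) (hb : b.Finite) (hd : d.Finite)
    (hcσ : ∀ ℓ, 0 < ℓ → ⇑σ '' c ⊆ fAdj K (c ∪ ⇑(σ ^ ℓ) '' c)) (hcb : c ⊆ fAdj K b)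
    (hbd : b ⊆ relAlgClosure (fAdj K d)) (hσd : ⇑σ '' d ⊆ relAlgClosure (fAdj K d))
    {k Ld : ℕ} (hLd : ∀ j, k ≤ j → ldSeq σ K d j = Ld) (m : ℕ) :
    deg (fAdj K (prolong σ (c ∪ d) k)) (prolong σ (c ∪ d) (k + m)) ≤
      Ld ^ m * deg (fAdj K d) b := by
  set F := fAdj K (prolong σ (c ∪ d) k)
  set n := k + m
  have hσn : K.map (σ ^ n).toRingHom = K := Subfield.map_pow_eq_self hK n
  have hKF : K ≤ F := le_fAdj K _
  have hcF : c ⊆ F := (subset_union_left.trans (subset_prolong σ _ k)).trans (subset_fAdj K _)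
  have hdF : fAdj K (prolong σ d k) ≤ F :=
    fAdj_mono_set K (prolong_union σ c d k ▸ subset_union_right)
  have hAF : relAlgClosure (fAdj K d) ≤ relAlgClosure F :=
    relAlgClosure_mono ((fAdj_mono_set K (subset_prolong σ d k)).trans hdF)
  have hbA : ⇑(σ ^ n) '' b ⊆ relAlgClosure (fAdj K d) :=
    image_pow_subset_relAlgClosure σ hK hd hσd hbd n
  have hdA : prolong σ d n ⊆ relAlgClosure (fAdj K d) :=
    prolong_subset_relAlgClosure σ hK hd hσd n
  -- `∇ₙ c ⊆ K(c, σⁿ c)` and `σⁿ c ⊆ K(σⁿ b)`: over `F`, `∇ₙ (c ∪ d)` only needs `∇ₙ d` and `σⁿ b`.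
  have hsub : prolong σ (c ∪ d) n ⊆ fAdj F (prolong σ d n ∪ ⇑(σ ^ n) '' b) := by
    rw [prolong_union]
    refine union_subset ((prolong_subset_fAdj_of_forall_pos σ hK hcσ n).trans
      (fAdj_le (hKF.trans (le_fAdj F _)) (union_subset (hcF.trans (le_fAdj F _)) ?_)))
      (subset_union_left.trans (subset_fAdj _ _))
    exact (image_subset_fAdj_image _ hσn hcb).trans
      (fAdj_le (hKF.trans (le_fAdj F _)) (subset_union_right.trans (subset_fAdj _ _)))
  calc deg F (prolong σ (c ∪ d) n) ≤ deg F (prolong σ d n ∪ ⇑(σ ^ n) '' b) :=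
        deg_le_of_subset_fAdj hsub ((prolong_finite σ hd n).union (hb.image _))
          (union_subset (hdA.trans hAF) (hbA.trans hAF))
    _ = deg F (prolong σ d n) * deg (fAdj F (prolong σ d n)) (⇑(σ ^ n) '' b) := deg_union ..
    _ ≤ deg (fAdj K (prolong σ d k)) (prolong σ d n) *
          deg (fAdj K (⇑(σ ^ n) '' d)) (⇑(σ ^ n) '' b) := by
        gcongr ?_ * ?_
        · exact deg_le_of_base_le hdF (prolong_finite σ hd n)
            (hdA.trans (relAlgClosure_mono (fAdj_mono_set K (subset_prolong σ d k))))
        · exact deg_le_of_base_le (fAdj_le (hKF.trans (le_fAdj F _))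
            ((image_pow_subset_prolong σ le_rfl).trans (subset_fAdj F _))) (hb.image _)
            (image_subset_relAlgClosure_image _ hσn hbd)
    _ = Ld ^ m * deg (fAdj K d) b := by rw [deg_prolong_add_eq_pow σ hLd, deg_image _ hσn]

theorem ld_union_le (hK : K.map σ.toRingHom = K) (hb : b.Finite) (hd : d.Finite)
    (hcσ : ∀ ℓ, 0 < ℓ → ⇑σ '' c ⊆ fAdj K (c ∪ ⇑(σ ^ ℓ) '' c)) (hcb : c ⊆ fAdj K b)
    (hbd : b ⊆ relAlgClosure (fAdj K d)) (hσd : ⇑σ '' d ⊆ relAlgClosure (fAdj K d))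
    {Ld Lcd : ℕ} (hLd : ∀ᶠ k in atTop, ldSeq σ K d k = Ld)
    (hLcd : ∀ᶠ k in atTop, ldSeq σ K (c ∪ d) k = Lcd) : Lcd ≤ Ld := by
  obtain ⟨k, hk⟩ := eventually_atTop.1 (hLd.and hLcd)
  refine Nat.le_of_forall_pow_le_mul_pow (C := deg (fAdj K d) b) fun m => ?_
  rw [← deg_prolong_add_eq_pow σ (fun j hj => (hk j hj).2) m, mul_comm]
  exact deg_prolong_union_le σ hK hb hd hcσ hcb hbd hσd (fun j hj => (hk j hj).1) m

end LimitDegree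

theorem stmt14_general [Field U] (σ : U ≃+* U) (K : Subfield U)
    (hK : K.map σ.toRingHom = K) {n p r : ℕ} (a : Fin n → U) (c : Fin p → U) (d : Fin r → U)
    (ha : ∀ i, IsAlgebraic (fAdj K (Set.range a)) (σ (a i)))
    (hc : ∀ i, c i ∈ diffAdj σ K (Set.range a))
    (hac : ∀ j, IsAlgebraic (fAdj K (Set.range c)) (a j))
    (hcσ : ∀ ℓ : ℕ, 0 < ℓ → ∀ i,
      σ (c i) ∈ fAdj K (Set.range c ∪ ⇑(σ ^ ℓ) '' Set.range c))
    (heq : ∀ x : U, IsAlgebraic (fAdj K (Set.range a)) x ↔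
      IsAlgebraic (fAdj K (Set.range d)) x)
    (Da : ℝ)
    (hDa : Tendsto (fun k => (ddSeq σ K (Set.range a) k : ℝ) ^ (1 / (k : ℝ)))
      atTop (nhds Da))
    (Ld : ℕ) (hLd : ∀ᶠ k in atTop, ldSeq σ K (Set.range d) k = Ld)
    (hLdDa : (Ld : ℝ) = Da)
    (Lcd : ℕ)
    (hLcd : ∀ᶠ k in atTop, ldSeq σ K (Set.range c ∪ Set.range d) k = Lcd) :
    (Lcd : ℝ) = Da := by
  have hfa := finite_range a
  obtain ⟨N, hcN⟩ := exists_subset_fAdj_prolong σ (finite_range c) (range_subset_iff.2 hc)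
  have hσa : ⇑σ '' range a ⊆ relAlgClosure (fAdj K (range a)) := by
    rintro _ ⟨_, ⟨i, rfl⟩, rfl⟩
    exact mem_relAlgClosure.2 (ha i).isIntegral
  have hda : relAlgClosure (fAdj K (range d)) = relAlgClosure (fAdj K (range a)) :=
    SetLike.ext fun x => by simp only [mem_relAlgClosure, ← isAlgebraic_iff_isIntegral, heq]
  have hcda : relAlgClosure (fAdj K (range c ∪ range d)) = relAlgClosure (fAdj K (range a)) := by
    refine le_antisymm (relAlgClosure_fAdj_le (le_fAdj K _) ((finite_range c).union
      (finite_range d)) (union_subset ?_ ?_)) (relAlgClosure_fAdj_le (le_fAdj K _) hfa ?_)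
    · exact hcN.trans (fAdj_le ((le_fAdj K _).trans (le_relAlgClosure _))
        (prolong_subset_relAlgClosure σ hK hfa hσa N))
    · exact hda ▸ (subset_fAdj K _).trans (le_relAlgClosure _)
    · rintro _ ⟨j, rfl⟩
      exact relAlgClosure_mono (fAdj_mono_set K subset_union_left)
        (mem_relAlgClosure.2 (hac j).isIntegral)
  have hDa_le : Da ≤ Lcd :=
    dd_le_ld σ hK ((finite_range c).union (finite_range d)) hfa hσa hcda hDa hLcd
  have hLcd_le : Lcd ≤ Ld := by
    refine ld_union_le σ hK (prolong_finite σ hfa N) (finite_range d) ?_ hcN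
      (hda ▸ prolong_subset_relAlgClosure σ hK hfa hσa N)
      (image_subset_relAlgClosure_of_eq σ hK hfa hσa hda) hLd hLcd
    rintro ℓ hℓ _ ⟨_, ⟨i, rfl⟩, rfl⟩
    exact hcσ ℓ hℓ i
  linarith [show (Lcd : ℝ) ≤ Ld by exact_mod_cast hLcd_le]

/-- if `c` is as in Theorem 1.7 and `d` is equi-algebraic with
`a` over `K` with `ld(d/K) = dd(a/K)`, then `ld((c,d)/K) = dd(a/K)`. -/
theorem stmt14 [Field U] [IsAlgClosed U] (σ : U ≃+* U) (K : Subfield U)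
    (hK : K.map σ.toRingHom = K) {n p r : ℕ} (a : Fin n → U) (c : Fin p → U) (d : Fin r → U)
    (ha : ∀ i, IsAlgebraic (fAdj K (Set.range a)) (σ (a i)))
    (hc : ∀ i, c i ∈ diffAdj σ K (Set.range a))
    (hac : ∀ j, IsAlgebraic (fAdj K (Set.range c)) (a j))
    (hcσ : ∀ ℓ : ℕ, 0 < ℓ → ∀ i,
      σ (c i) ∈ fAdj K (Set.range c ∪ ⇑(σ ^ ℓ) '' Set.range c))
    (hd : ∀ i, IsAlgebraic (fAdj K (Set.range d)) (σ (d i)))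
    (heq : ∀ x : U, IsAlgebraic (fAdj K (Set.range a)) x ↔
      IsAlgebraic (fAdj K (Set.range d)) x)
    (Da : ℝ)
    (hDa : Tendsto (fun k => (ddSeq σ K (Set.range a) k : ℝ) ^ (1 / (k : ℝ)))
      atTop (nhds Da))
    (Ld : ℕ) (hLd : ∀ᶠ k in atTop, ldSeq σ K (Set.range d) k = Ld)
    (hLdDa : (Ld : ℝ) = Da)
    (Lcd : ℕ)
    (hLcd : ∀ᶠ k in atTop, ldSeq σ K (Set.range c ∪ Set.range d) k = Lcd) :
    (Lcd : ℝ) = Da :=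
  stmt14_general σ K hK a c d ha hc hac hcσ heq Da hDa Ld hLd hLdDa Lcd hLcd
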